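/- Let U, Û ∈ O_{p,r} and let U_⊥ be an orthogonal complement of U. Then there exists R ∈ O_r such that ‖ÛᵀU − R‖_F ≤ min{ ‖U_⊥ᵀÛ‖_F², sqrt(r)·‖U_⊥ᵀÛ‖² }. -/

import Mathlib

/-!
Write `ÛᵀU = Q Σ Wᵀ` (singular value decomposition) and take `R = Q Wᵀ`. Because
`U Uᵀ + U_⊥ U_⊥ᵀ = 1` and `ÛᵀÛ = 1`, the matrix `B = U_⊥ᵀÛ` satisfies
`(ÛᵀU)(ÛᵀU)ᵀ + BᵀB = 1`, so the columns of `B Q` are orthogonal with squared norms `1 - σᵢ²`.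
Hence `0 ≤ σᵢ ≤ 1`, `‖B‖_F² = ∑ (1 - σᵢ²)` and `1 - σᵢ² ≤ ‖B‖²`, while
`‖ÛᵀU - R‖_F² = ∑ (1 - σᵢ)²` with `0 ≤ 1 - σᵢ ≤ 1 - σᵢ²`; both bounds follow.
-/

open Matrix

/-- Spectral (operator) norm of a real matrix. -/
noncomputable def spec {m n : ℕ} (A : Matrix (Fin m) (Fin n) ℝ) : ℝ :=
  sSup {c : ℝ | ∃ v : Fin n → ℝ, (∑ j, v j ^ 2) ≤ 1 ∧
    c = Real.sqrt (∑ i, (A.mulVec v i) ^ 2)}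

/-- Frobenius norm of a real matrix. -/
noncomputable def frob {m n : ℕ} (A : Matrix (Fin m) (Fin n) ℝ) : ℝ :=
  Real.sqrt (∑ i, ∑ j, (A i j) ^ 2)

theorem transpose_mul_self_apply_self {m n : Type*} [Fintype m] (M : Matrix m n ℝ) (i : n) :
    (Mᵀ * M) i i = ∑ k, M k i ^ 2 := by
  simp only [mul_apply, transpose_apply, sq]

section Frobenius

variable {m n : ℕ}

theorem frob_eq_sqrt_trace (A : Matrix (Fin m) (Fin n) ℝ) : frob A = √(Aᵀ * A).trace := by
  rw [frob, trace, Finset.sum_comm]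
  simp [mul_apply, sq]

theorem frob_orthogonal_mul {Q : Matrix (Fin m) (Fin m) ℝ} (hQ : Q ∈ orthogonalGroup (Fin m) ℝ)
    (A : Matrix (Fin m) (Fin n) ℝ) : frob (Q * A) = frob A := by
  rw [frob_eq_sqrt_trace, frob_eq_sqrt_trace, transpose_mul, Matrix.mul_assoc,
    ← Matrix.mul_assoc Qᵀ, (mem_orthogonalGroup_iff' _ _).mp hQ, Matrix.one_mul]

theorem frob_mul_orthogonal {Q : Matrix (Fin n) (Fin n) ℝ} (hQ : Q ∈ orthogonalGroup (Fin n) ℝ)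
    (A : Matrix (Fin m) (Fin n) ℝ) : frob (A * Q) = frob A := by
  have : (A * Q)ᵀ * (A * Q) = Qᵀ * (Aᵀ * A * Q) := by simp only [transpose_mul, Matrix.mul_assoc]
  rw [frob_eq_sqrt_trace, frob_eq_sqrt_trace, this, trace_mul_comm, Matrix.mul_assoc,
    (mem_orthogonalGroup_iff _ _).mp hQ, Matrix.mul_one]

theorem frob_diagonal (d : Fin n → ℝ) : frob (diagonal d) = √(∑ i, d i ^ 2) := by
  simp [frob, diagonal_apply, ite_pow]

end Frobenius

theorem spec_bddAbove {m n : ℕ} (A : Matrix (Fin m) (Fin n) ℝ) :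
    BddAbove {c : ℝ | ∃ v : Fin n → ℝ, (∑ j, v j ^ 2) ≤ 1 ∧
      c = Real.sqrt (∑ i, (A.mulVec v i) ^ 2)} := by
  refine ⟨frob A, ?_⟩
  rintro c ⟨v, hv, rfl⟩
  refine Real.sqrt_le_sqrt (Finset.sum_le_sum fun i _ => ?_)
  calc (A *ᵥ v) i ^ 2 = (∑ j, A i j * v j) ^ 2 := rfl
    _ ≤ (∑ j, A i j ^ 2) * ∑ j, v j ^ 2 := Finset.sum_mul_sq_le_sq_mul_sq _ _ _
    _ ≤ ∑ j, A i j ^ 2 := mul_le_of_le_one_right (by positivity) hv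

theorem sum_sq_mulVec_le_spec_sq {m n : ℕ} (A : Matrix (Fin m) (Fin n) ℝ) {v : Fin n → ℝ}
    (hv : ∑ j, v j ^ 2 ≤ 1) : ∑ i, (A *ᵥ v) i ^ 2 ≤ spec A ^ 2 :=
  (Real.sqrt_le_iff.mp (le_csSup (spec_bddAbove A) ⟨v, hv, rfl⟩)).2

section Orthogonal

variable {n : Type*} [Fintype n] [DecidableEq n]

/-- Normalize the nonzero columns of `N` and extend them to an orthonormal basis. -/
theorem exists_orthogonal_mul_diagonal_sqrt (N : Matrix n n ℝ) {d : n → ℝ}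
    (hN : Nᵀ * N = diagonal d) :
    ∃ W ∈ orthogonalGroup n ℝ, N = W * diagonal fun i => √(d i) := by
  have hcol : ∀ i j, ∑ k, N k i * N k j = diagonal d i j := fun i j => by
    simpa [mul_apply] using congrFun (congrFun hN i) j
  have hd : ∀ i, ∑ k, N k i ^ 2 = d i := fun i => by
    rw [← transpose_mul_self_apply_self, hN, diagonal_apply_eq]
  have hd0 : ∀ i, 0 ≤ d i := fun i => hd i ▸ by positivity
  have hsqrt : ∀ i, d i ≠ 0 → √(d i) ≠ 0 := fun i hi =>
    Real.sqrt_ne_zero'.mpr (lt_of_le_of_ne (hd0 i) (Ne.symm hi))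
  let u : n → EuclideanSpace ℝ n := fun i => WithLp.toLp 2 fun k => (√(d i))⁻¹ * N k i
  have hu : Orthonormal ℝ ({i | d i ≠ 0}.domRestrict u) := by
    rw [orthonormal_iff_ite]
    rintro ⟨i, hi⟩ ⟨j, hj⟩
    have hinner : inner ℝ (u i) (u j) = (√(d i))⁻¹ * (√(d j))⁻¹ * diagonal d i j := by
      simp only [u, PiLp.inner_apply, RCLike.inner_apply, conj_trivial, ← hcol, Finset.mul_sum]
      exact Finset.sum_congr rfl fun k _ => by ring
    simp only [Set.domRestrict_apply, hinner, Subtype.mk.injEq]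
    split_ifs with hij
    · subst hij
      rw [diagonal_apply_eq]
      field_simp [hsqrt i hi]
      exact (Real.sq_sqrt (hd0 i)).symm
    · rw [diagonal_apply_ne _ hij, mul_zero]
  obtain ⟨b, hb⟩ := hu.exists_orthonormalBasis_extension_of_card_eq (by simp)
  refine ⟨(EuclideanSpace.basisFun n ℝ).toBasis.toMatrix b,
    (EuclideanSpace.basisFun n ℝ).toMatrix_orthonormalBasis_mem_unitary b, ?_⟩
  ext k i
  rw [mul_diagonal, Module.Basis.toMatrix_apply, OrthonormalBasis.coe_toBasis_repr_apply,
    EuclideanSpace.basisFun_repr]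
  by_cases hi : d i = 0
  · have : N k i = 0 := by
      rw [← hd, Finset.sum_eq_zero_iff_of_nonneg (fun _ _ => sq_nonneg _)] at hi
      exact pow_eq_zero_iff two_ne_zero |>.mp (hi k (Finset.mem_univ k))
    simp [hi, this]
  · rw [hb i hi]
    simp only [u]
    field_simp [hsqrt i hi]

theorem exists_singular_value_decomposition (A : Matrix n n ℝ) :
    ∃ Q ∈ orthogonalGroup n ℝ, ∃ W ∈ orthogonalGroup n ℝ, ∃ σ : n → ℝ,
      (∀ i, 0 ≤ σ i) ∧ A = Q * diagonal σ * Wᵀ := by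
  obtain ⟨Q, hQ, d, hAAt⟩ : ∃ Q ∈ orthogonalGroup n ℝ, ∃ d, A * Aᵀ = Q * diagonal d * Qᵀ := by
    have hS : (A * Aᵀ).IsHermitian := by simpa using isHermitian_mul_conjTranspose_self A
    exact ⟨_, hS.eigenvectorUnitary.2, hS.eigenvalues, by
      simpa [Unitary.conjStarAlgAut_apply, star_eq_conjTranspose] using hS.spectral_theorem⟩
  have hN : (Aᵀ * Q)ᵀ * (Aᵀ * Q) = diagonal d := by
    rw [transpose_mul, transpose_transpose, Matrix.mul_assoc, ← Matrix.mul_assoc A, hAAt]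
    simp only [← Matrix.mul_assoc, (mem_orthogonalGroup_iff' _ _).mp hQ, Matrix.one_mul]
    rw [Matrix.mul_assoc, (mem_orthogonalGroup_iff' _ _).mp hQ, Matrix.mul_one]
  obtain ⟨W, hW, hAtQ⟩ := exists_orthogonal_mul_diagonal_sqrt _ hN
  refine ⟨Q, hQ, W, hW, fun i => √(d i), fun i => Real.sqrt_nonneg _, ?_⟩
  have hAt : Aᵀ = W * diagonal (fun i => √(d i)) * Qᵀ := by
    rw [← hAtQ, Matrix.mul_assoc, (mem_orthogonalGroup_iff _ _).mp hQ, Matrix.mul_one]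
  simpa [transpose_mul, Matrix.mul_assoc] using congrArg transpose hAt

theorem transpose_mul_self_mul_eq_diagonal_one_sub_sq {m : Type*} [Fintype m]
    {A Q W : Matrix n n ℝ} {B : Matrix m n ℝ} {σ : n → ℝ}
    (hAB : A * Aᵀ + Bᵀ * B = 1) (hQ : Q ∈ orthogonalGroup n ℝ) (hW : W ∈ orthogonalGroup n ℝ)
    (hA : A = Q * diagonal σ * Wᵀ) :
    (B * Q)ᵀ * (B * Q) = diagonal fun i => 1 - σ i ^ 2 := by
  have hQQ := (mem_orthogonalGroup_iff' _ _).mp hQ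
  have hQA : Qᵀ * A = diagonal σ * Wᵀ := by
    rw [hA, ← Matrix.mul_assoc, ← Matrix.mul_assoc, hQQ, Matrix.one_mul]
  have hAAt : Qᵀ * (A * Aᵀ) * Q = diagonal fun i => σ i ^ 2 := calc
    Qᵀ * (A * Aᵀ) * Q = (Qᵀ * A) * (Qᵀ * A)ᵀ := by
      simp only [transpose_mul, transpose_transpose, Matrix.mul_assoc]
    _ = diagonal σ * (Wᵀ * W) * diagonal σ := by
      simp only [hQA, transpose_mul, transpose_transpose, diagonal_transpose, Matrix.mul_assoc]
    _ = diagonal fun i => σ i ^ 2 := by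
      rw [(mem_orthogonalGroup_iff' _ _).mp hW, Matrix.mul_one, diagonal_mul_diagonal]
      simp only [sq]
  calc (B * Q)ᵀ * (B * Q) = Qᵀ * (1 - A * Aᵀ) * Q := by
        rw [← hAB, add_sub_cancel_left, transpose_mul, Matrix.mul_assoc, Matrix.mul_assoc,
          Matrix.mul_assoc]
    _ = diagonal fun i => 1 - σ i ^ 2 := by
      rw [Matrix.mul_sub, Matrix.sub_mul, Matrix.mul_one, hQQ, hAAt, ← diagonal_one,
        diagonal_sub]

end Orthogonal

section ComplementBounds

variable {m r : ℕ} {B : Matrix (Fin m) (Fin r) ℝ} {Q : Matrix (Fin r) (Fin r) ℝ} {σ : Fin r → ℝ}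

theorem sum_sq_mul_apply_eq_one_sub_sq
    (hBQ : (B * Q)ᵀ * (B * Q) = diagonal fun i => 1 - σ i ^ 2) (i : Fin r) :
    ∑ k, (B * Q) k i ^ 2 = 1 - σ i ^ 2 := by
  rw [← transpose_mul_self_apply_self, hBQ, diagonal_apply_eq]

theorem sq_le_one_of_transpose_mul_self_mul_eq
    (hBQ : (B * Q)ᵀ * (B * Q) = diagonal fun i => 1 - σ i ^ 2) (i : Fin r) : σ i ^ 2 ≤ 1 :=
  sub_nonneg.mp (sum_sq_mul_apply_eq_one_sub_sq hBQ i ▸ by positivity)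

theorem one_sub_sq_le_spec_sq (hQ : Q ∈ orthogonalGroup (Fin r) ℝ)
    (hBQ : (B * Q)ᵀ * (B * Q) = diagonal fun i => 1 - σ i ^ 2) (i : Fin r) :
    1 - σ i ^ 2 ≤ spec B ^ 2 := by
  have hcol : ∑ k, Q k i ^ 2 = 1 := by
    rw [← transpose_mul_self_apply_self, (mem_orthogonalGroup_iff' _ _).mp hQ, one_apply_eq]
  rw [← sum_sq_mul_apply_eq_one_sub_sq hBQ]
  exact sum_sq_mulVec_le_spec_sq B hcol.le

theorem frob_eq_sqrt_sum_one_sub_sq (hQ : Q ∈ orthogonalGroup (Fin r) ℝ)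
    (hBQ : (B * Q)ᵀ * (B * Q) = diagonal fun i => 1 - σ i ^ 2) :
    frob B = √(∑ i, (1 - σ i ^ 2)) := by
  rw [← frob_mul_orthogonal hQ, frob_eq_sqrt_trace, hBQ, trace_diagonal]

end ComplementBounds

theorem sqrt_sum_sq_sub_one_le_sum_one_sub_sq {ι : Type*} [Fintype ι] {σ : ι → ℝ}
    (h0 : ∀ i, 0 ≤ σ i) (h1 : ∀ i, σ i ≤ 1) :
    √(∑ i, (σ i - 1) ^ 2) ≤ ∑ i, (1 - σ i ^ 2) := calc
  √(∑ i, (σ i - 1) ^ 2) = √(∑ i, (1 - σ i) ^ 2) := by simp only [← neg_sub (σ _) 1, neg_sq]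
  _ ≤ ∑ i, (1 - σ i) :=
    Real.sqrt_le_iff.mpr ⟨Finset.sum_nonneg fun i _ => sub_nonneg.mpr (h1 i),
      Finset.sum_sq_le_sq_sum_of_nonneg fun i _ => sub_nonneg.mpr (h1 i)⟩
  _ ≤ ∑ i, (1 - σ i ^ 2) := Finset.sum_le_sum fun i _ => by nlinarith [h0 i, h1 i]

theorem sqrt_sum_sq_sub_one_le_sqrt_card_mul {ι : Type*} [Fintype ι] {σ : ι → ℝ} {c : ℝ}
    (h0 : ∀ i, 0 ≤ σ i) (h1 : ∀ i, σ i ≤ 1) (hc0 : 0 ≤ c) (hc : ∀ i, 1 - σ i ^ 2 ≤ c) :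
    √(∑ i, (σ i - 1) ^ 2) ≤ √(Fintype.card ι) * c := calc
  √(∑ i, (σ i - 1) ^ 2) ≤ √(∑ _i : ι, c ^ 2) := Real.sqrt_le_sqrt <| Finset.sum_le_sum fun i _ =>
    sq_le_sq' (by nlinarith [h0 i, h1 i, hc i]) (by nlinarith [h0 i, h1 i, hc i])
  _ = √(Fintype.card ι) * c := by
    rw [Finset.sum_const, Finset.card_univ, nsmul_eq_mul, Real.sqrt_mul (Nat.cast_nonneg _),
      Real.sqrt_sq hc0]

theorem frob_mul_diagonal_mul_transpose_sub {r : ℕ} {Q W : Matrix (Fin r) (Fin r) ℝ}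
    (hQ : Q ∈ orthogonalGroup (Fin r) ℝ) (hW : W ∈ orthogonalGroup (Fin r) ℝ) (σ : Fin r → ℝ) :
    frob (Q * diagonal σ * Wᵀ - Q * Wᵀ) = √(∑ i, (σ i - 1) ^ 2) := by
  have : Q * diagonal σ * Wᵀ - Q * Wᵀ = Q * (diagonal (fun i => σ i - 1) * Wᵀ) := by
    rw [← diagonal_sub σ fun _ => 1, diagonal_one, Matrix.sub_mul, Matrix.mul_sub, Matrix.one_mul,
      Matrix.mul_assoc]
  rw [this, frob_orthogonal_mul hQ, frob_mul_orthogonal (transpose_mem_unitaryGroup_iff.mpr hW),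
    frob_diagonal]

theorem stmt3_general (p r : ℕ) (U Uhat : Matrix (Fin p) (Fin r) ℝ)
    (Uperp : Matrix (Fin p) (Fin (p - r)) ℝ)
    (hUhat : Uhatᵀ * Uhat = 1)
    (hcomplete : U * Uᵀ + Uperp * Uperpᵀ = 1) :
    ∃ R : Matrix (Fin r) (Fin r) ℝ, Rᵀ * R = 1 ∧ R * Rᵀ = 1 ∧
      frob (Uhatᵀ * U - R) ≤
        min (frob (Uperpᵀ * Uhat) ^ 2) (Real.sqrt r * spec (Uperpᵀ * Uhat) ^ 2) := by
  set B := Uperpᵀ * Uhat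
  have hAB : (Uhatᵀ * U) * (Uhatᵀ * U)ᵀ + Bᵀ * B = 1 := by
    simp only [B, transpose_mul, transpose_transpose, Matrix.mul_assoc, ← Matrix.mul_add]
    rw [← Matrix.mul_assoc U, ← Matrix.mul_assoc Uperp, ← Matrix.add_mul, hcomplete,
      Matrix.one_mul, hUhat]
  obtain ⟨Q, hQ, W, hW, σ, hσ0, hA⟩ := exists_singular_value_decomposition (Uhatᵀ * U)
  have hBQ := transpose_mul_self_mul_eq_diagonal_one_sub_sq hAB hQ hW hA
  have hσsq := sq_le_one_of_transpose_mul_self_mul_eq hBQ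
  have hσ1 : ∀ i, σ i ≤ 1 := fun i => (sq_le_one_iff₀ (hσ0 i)).mp (hσsq i)
  have hR : Q * Wᵀ ∈ orthogonalGroup (Fin r) ℝ :=
    Submonoid.mul_mem _ hQ (transpose_mem_unitaryGroup_iff.mpr hW)
  refine ⟨Q * Wᵀ, (mem_orthogonalGroup_iff' _ _).mp hR, (mem_orthogonalGroup_iff _ _).mp hR, ?_⟩
  rw [hA, frob_mul_diagonal_mul_transpose_sub hQ hW, frob_eq_sqrt_sum_one_sub_sq hQ hBQ,
    Real.sq_sqrt (Finset.sum_nonneg fun i _ => sub_nonneg.mpr (hσsq i))]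
  refine le_min (sqrt_sum_sq_sub_one_le_sum_one_sub_sq hσ0 hσ1) ?_
  simpa using
    sqrt_sum_sq_sub_one_le_sqrt_card_mul hσ0 hσ1 (sq_nonneg _) (one_sub_sq_le_spec_sq hQ hBQ)

/-- For `U, Û ∈ O_{p,r}` and `U_⊥` an orthogonal complement of `U`, there is an
orthogonal `R ∈ O_r` with `‖ÛᵀU − R‖_F ≤ min{‖U_⊥ᵀÛ‖_F², √r·‖U_⊥ᵀÛ‖²}`. -/
theorem stmt3 (p r : ℕ) (U Uhat : Matrix (Fin p) (Fin r) ℝ)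
    (Uperp : Matrix (Fin p) (Fin (p - r)) ℝ)
    (hU : Uᵀ * U = 1) (hUhat : Uhatᵀ * Uhat = 1)
    (hUperp : Uperpᵀ * Uperp = 1) (horth : Uᵀ * Uperp = 0)
    (hcomplete : U * Uᵀ + Uperp * Uperpᵀ = 1) :
    ∃ R : Matrix (Fin r) (Fin r) ℝ, Rᵀ * R = 1 ∧ R * Rᵀ = 1 ∧
      frob (Uhatᵀ * U - R) ≤
        min (frob (Uperpᵀ * Uhat) ^ 2) (Real.sqrt r * spec (Uperpᵀ * Uhat) ^ 2) :=
  stmt3_general p r U Uhat Uperp hUhat hcomplete
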